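/- For every integer α ≥ 1, every natural number k and every 2-level store ω over Γ = {Z, B, W, F}, the contour automaton A_α admits a finite sequence of steps leading from the configuration (q_0, φ(σ^k(B)), (B, F^k)·ω) to the configuration (q_0, ε, ω), where (B, F^k)·ω denotes the store whose top entry is (B, F^k) followed by the entries of ω. -/

import Mathlib

/-- Operations on a 2-level iterated pushdown store. -/
inductive Op (Γ : Type*) where
  | pop1 : Op Γ
  | pop2 : Op Γ
  | push1 : List Γ → Op Γ
  | push2 : List Γ → Op Γ

/-- A 2-level pushdown store: a finite list of entries `(A, s)` with `A` a letter of `Γ`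
and `s ∈ Γ*` the inner store of the entry. -/
abbrev Store (Γ : Type*) := List (Γ × List Γ)

/-- The top symbols of a 2-level store: the letter of the top entry followed by the first
letter of its inner store when that inner store is nonempty; an element of `Γ ∪ Γ²`. -/
def topsym {Γ : Type*} : Store Γ → List Γ
  | [] => []
  | (A, s) :: _ => A :: s.take 1

/-- Apply an operation to a 2-level store (a partial operation):
`pop1` removes the top entry; `pop2` removes the first letter of the inner store of the
top entry (when nonempty); `push1 w` replaces the top entry `(A, s)` by the entries
`(w_1, s), …, (w_m, s)`; `push2 u` replaces the top entry `(A, s)` by `(A, u ++ s)`. -/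
def applyOp {Γ : Type*} : Op Γ → Store Γ → Option (Store Γ)
  | .pop1, _ :: rest => some rest
  | .pop2, (A, _ :: s) :: rest => some ((A, s) :: rest)
  | .push1 w, (_, s) :: rest => some (w.map (fun x => (x, s)) ++ rest)
  | .push2 u, (A, s) :: rest => some ((A, u ++ s) :: rest)
  | _, _ => none

/-- A 2-iterated pushdown automaton with state set `Q`, input alphabet `In` and store
alphabet `Γ`: an initial state `q0`, an initial store symbol `Z`, and a transition table
`δ` assigning to each triple `(q, a, t)` — with `a ∈ In ∪ {ε}` and `t ∈ Γ ∪ Γ²` — a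
finite set (list) of instructions `(q', op)`. -/
structure IPDA2 (Q In Γ : Type*) where
  q0 : Q
  Z : Γ
  δ : Q → Option In → List Γ → List (Q × Op Γ)

/-- A configuration: current state, remaining input word, current 2-level store. -/
abbrev Config (Q In Γ : Type*) := Q × List In × Store Γ

/-- One computation step: an instruction from `δ(q, a, topsym ω)` may be applied, where
`a = ε` (no input consumed) or `a` is the first letter of the remaining input (which is
then consumed); the state changes to `q'` and the operation is applied to the store. -/
inductive IPDA2.Step {Q In Γ : Type*} (M : IPDA2 Q In Γ) :
    Config Q In Γ → Config Q In Γ → Prop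
  | eps {q q' : Q} {w : List In} {ω ω' : Store Γ} {op : Op Γ} :
      (q', op) ∈ M.δ q none (topsym ω) → applyOp op ω = some ω' →
      M.Step (q, w, ω) (q', w, ω')
  | read {q q' : Q} {a : In} {w : List In} {ω ω' : Store Γ} {op : Op Γ} :
      (q', op) ∈ M.δ q (some a) (topsym ω) → applyOp op ω = some ω' →
      M.Step (q, a :: w, ω) (q', w, ω')

/-- A finite sequence of computation steps. -/
def IPDA2.Steps {Q In Γ : Type*} (M : IPDA2 Q In Γ) :
    Config Q In Γ → Config Q In Γ → Prop :=
  Relation.ReflTransGen M.Step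

/-- Acceptance: some finite sequence of steps leads from the initial configuration
`(q0, w, [(Z, ε)])` to a configuration with empty remaining input and empty store. -/
def IPDA2.Accepts {Q In Γ : Type*} (M : IPDA2 Q In Γ) (w : List In) : Prop :=
  ∃ q : Q, M.Steps (M.q0, w, [(M.Z, [])]) (q, [], [])

/-- The two-letter alphabet `{B, W}` of node labels. -/
inductive BW where
  | B : BW
  | W : BW
  deriving DecidableEq

/-- The substitution `σ` determined by `σ(B) = BW` and `σ(W) = BWW`, on letters. -/
def sigmaLetter : BW → List BW
  | .B => [.B, .W]
  | .W => [.B, .W, .W]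

/-- The substitution `σ` extended to words (monoid morphism of words). -/
def sigmaWord (w : List BW) : List BW := w.flatMap sigmaLetter

/-- The two-letter input alphabet `{b, w}`. -/
inductive bw where
  | b : bw
  | w : bw
  deriving DecidableEq

/-- The letter renaming `φ : B ↦ b, W ↦ w`. -/
def phi : BW → bw
  | .B => .b
  | .W => .w

/-- The states of the contour automaton. -/
inductive Qc where
  | q0 : Qc
  | q1 : Qc
  deriving DecidableEq

/-- The store alphabet `Γ = {Z, B, W, F}` of the contour automaton. -/
inductive Γc where
  | Z : Γc
  | B : Γc
  | W : Γc
  | F : Γc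
  deriving DecidableEq

/-- The transition table of the contour automaton `A_α`. -/
def contourδ (α : ℕ) : Qc → Option bw → List Γc → List (Qc × Op Γc)
  | .q0, none, [.Z] => [(.q0, .push2 [.F]), (.q0, .push1 (List.replicate α Γc.W))]
  | .q0, none, [.Z, .F] => [(.q0, .push2 [.F]), (.q0, .push1 (List.replicate α Γc.W))]
  | .q0, none, [.W, .F] => [(.q1, .pop2)]
  | .q0, none, [.B, .F] => [(.q1, .pop2)]
  | .q0, some .b, [.B] => [(.q0, .pop1)]
  | .q0, some .w, [.W] => [(.q0, .pop1)]
  | .q1, none, [.W, .F] => [(.q0, .push1 [.B, .W, .W])]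
  | .q1, none, [.W] => [(.q0, .push1 [.B, .W, .W])]
  | .q1, none, [.B, .F] => [(.q0, .push1 [.B, .W])]
  | .q1, none, [.B] => [(.q0, .push1 [.B, .W])]
  | _, _, _ => []

/-- The contour automaton `A_α`, a 2-iterated pushdown automaton over `{b, w}`. -/
def contourM (α : ℕ) : IPDA2 Qc bw Γc := ⟨.q0, .Z, contourδ α⟩

/-!
By induction on `k`. In state `q₀`, a top entry `(X, F^(k+1))` loses one `F` by `pop₂`, and
in state `q₁` the letter `X` is replaced by the entries of `σ(X)`, each carrying `F^k`. Since
`σ^(k+1)(X) = σ^k(σ(X))` and `σ^k` is a morphism of words, the induction hypothesis consumes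
the input block by block, one block per letter of `σ(X)`. With `k = 0`, the entry `(X, ε)`
reads the letter `φ(X)` and is popped.
-/

def BW.toΓc : BW → Γc
  | .B => .B
  | .W => .W

lemma sigmaWord_append (u v : List BW) :
    sigmaWord (u ++ v) = sigmaWord u ++ sigmaWord v :=
  List.flatMap_append

lemma sigmaWord_iterate_nil (m : ℕ) : sigmaWord^[m] [] = [] :=
  Function.iterate_fixed rfl m

lemma sigmaWord_iterate_append (m : ℕ) (u v : List BW) :
    sigmaWord^[m] (u ++ v) = sigmaWord^[m] u ++ sigmaWord^[m] v := by
  induction m generalizing u v with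
  | zero => rfl
  | succ m ih => simp only [Function.iterate_succ_apply, sigmaWord_append, ih]

lemma sigmaWord_iterate_succ_singleton (m : ℕ) (X : BW) :
    sigmaWord^[m + 1] [X] = sigmaWord^[m] (sigmaLetter X) := by
  simp [sigmaWord]

section Contour

variable (α : ℕ)

lemma contourM_step_read (X : BW) (v : List bw) (ω : Store Γc) :
    (contourM α).Step (.q0, phi X :: v, (X.toΓc, []) :: ω) (.q0, v, ω) := by
  cases X <;> exact .read (op := .pop1) (by simp [contourM, contourδ, topsym, BW.toΓc, phi]) rfl

lemma contourM_step_pop2 (X : BW) (m : ℕ) (x : List bw) (ω : Store Γc) :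
    (contourM α).Step (.q0, x, (X.toΓc, List.replicate (m + 1) .F) :: ω)
      (.q1, x, (X.toΓc, List.replicate m .F) :: ω) := by
  cases X <;> exact .eps (op := .pop2) (by simp [contourM, contourδ, topsym, BW.toΓc]) rfl

lemma contourM_step_push1 (X : BW) (m : ℕ) (x : List bw) (ω : Store Γc) :
    (contourM α).Step (.q1, x, (X.toΓc, List.replicate m .F) :: ω)
      (.q0, x, (sigmaLetter X).map (fun Y => (Y.toΓc, List.replicate m .F)) ++ ω) := by
  refine .eps (op := .push1 ((sigmaLetter X).map BW.toΓc)) ?_ ?_ <;>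
    cases X <;> cases m <;> simp [contourM, contourδ, topsym, applyOp, BW.toΓc, sigmaLetter]

lemma contourM_steps_word_of_letter (m : ℕ)
    (hletter : ∀ (X : BW) (v : List bw) (ω : Store Γc), (contourM α).Steps
      (.q0, (sigmaWord^[m] [X]).map phi ++ v, (X.toΓc, List.replicate m .F) :: ω) (.q0, v, ω))
    (u : List BW) (v : List bw) (ω : Store Γc) :
    (contourM α).Steps
      (.q0, (sigmaWord^[m] u).map phi ++ v, u.map (fun Y => (Y.toΓc, List.replicate m .F)) ++ ω)
      (.q0, v, ω) := by
  induction u generalizing v ω with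
  | nil => rw [sigmaWord_iterate_nil]; exact .refl
  | cons X u ih =>
    rw [← List.singleton_append, sigmaWord_iterate_append, List.map_append, List.append_assoc]
    exact (hletter X _ _).trans (ih v ω)

lemma contourM_steps_letter (k : ℕ) (X : BW) (v : List bw) (ω : Store Γc) :
    (contourM α).Steps
      (.q0, (sigmaWord^[k] [X]).map phi ++ v, (X.toΓc, List.replicate k .F) :: ω) (.q0, v, ω) := by
  induction k generalizing X v ω with
  | zero => exact .single (contourM_step_read α X v ω)
  | succ m ih =>
    refine .head (contourM_step_pop2 α X m _ ω) (.head (contourM_step_push1 α X m _ ω) ?_)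
    rw [sigmaWord_iterate_succ_singleton]
    exact contourM_steps_word_of_letter α m ih (sigmaLetter X) v ω

end Contour

theorem contourM_steps_B_general (α : ℕ) (k : ℕ) (ω : Store Γc) :
    (contourM α).Steps (Qc.q0, (sigmaWord^[k] [BW.B]).map phi,
        (Γc.B, List.replicate k Γc.F) :: ω)
      (Qc.q0, [], ω) := by
  simpa [BW.toΓc] using contourM_steps_letter α k .B [] ω

/-- For every integer `α ≥ 1`, every `k : ℕ` and every 2-level store `ω` over
`Γ = {Z, B, W, F}`, the contour automaton `A_α` admits a finite sequence of steps from
the configuration `(q₀, φ(σ^k(B)), (B, F^k)·ω)` to the configuration `(q₀, ε, ω)`. -/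
theorem contourM_steps_B (α : ℕ) (hα : 1 ≤ α) (k : ℕ) (ω : Store Γc) :
    (contourM α).Steps (Qc.q0, (sigmaWord^[k] [BW.B]).map phi,
        (Γc.B, List.replicate k Γc.F) :: ω)
      (Qc.q0, [], ω) :=
  contourM_steps_B_general α k ω
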